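/- For every even integer q ≥ 2 and every c > 0 there exists β* > 0 such that for every real β with |β| ≤ β*: the power series Φ converges absolutely for all |z| ≤ 2, and sup_{|z| ≤ 2} |Φ(z) − z| ≤ c, sup_{|z| ≤ 2} |Φ'(z) − 1| ≤ c, and sup_{|z| ≤ 2} |z|²·|Φ''(z)| ≤ c. -/

import Mathlib

open MeasureTheory Filter

noncomputable section

namespace SYK

attribute [local instance] Classical.propDecidable

/-- The chord crossing sign `K(x,y)`. -/
def K (x y : ℝ × ℝ) : ℝ :=
  if (x.1 < y.1 ∧ y.1 < x.2 ∧ x.2 < y.2) ∨ (y.1 < x.1 ∧ x.1 < y.2 ∧ y.2 < x.2) then -1 else 1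

lemma K_symm (x y : ℝ × ℝ) : K x y = K y x := if_congr or_comm rfl rfl

/-- The law of `(min U₁ U₂, max U₁ U₂)` for `U₁, U₂` i.i.d. uniform on `[0,1]`. -/
def nu : Measure (ℝ × ℝ) :=
  Measure.map (fun p : ℝ × ℝ => (min p.1 p.2, max p.1 p.2))
    (volume.restrict (Set.Icc (0 : ℝ) 1 ×ˢ Set.Icc (0 : ℝ) 1))

/-- Two vertices are related if some hyperedge of `E` contains both. -/
def edgeRel {N : ℕ} (E : Finset (Finset (Fin N))) (a b : Fin N) : Prop :=
  ∃ e ∈ E, a ∈ e ∧ b ∈ e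

/-- A hypergraph on the full vertex set `Fin N` is connected. -/
def HGConnected {N : ℕ} (E : Finset (Finset (Fin N))) : Prop :=
  ∀ a b : Fin N, Relation.ReflTransGen (edgeRel E) a b

/-- `E` is a `q`-uniform hypertree on the vertex set `Fin N`. -/
def IsHypertree (q N : ℕ) (E : Finset (Finset (Fin N))) : Prop :=
  (∀ e ∈ E, e.card = q) ∧ HGConnected E ∧ (q - 1) * E.card = N - 1

/-- The set `𝒯_N` of `q`-uniform hypertrees on `{1,…,N}`. -/
def trees (q N : ℕ) : Finset (Finset (Finset (Fin N))) :=
  Finset.univ.filter (IsHypertree q N)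

/-- Sign contributed by an unordered pair of hyperedges with chords given by `X`. -/
def pairSign {N : ℕ} (X : Finset (Fin N) → ℝ × ℝ) : Sym2 (Finset (Fin N)) → ℝ :=
  Sym2.lift ⟨fun e₁ e₂ => if Odd (e₁ ∩ e₂).card then K (X e₁) (X e₂) else 1,
    fun e₁ e₂ => if_congr (by rw [Finset.inter_comm]) (K_symm _ _) rfl⟩

/-- `B_H(X)`: the product of `K(X(e₁),X(e₂))` over unordered pairs of distinct
hyperedges sharing an odd number of vertices. -/
def BE {N : ℕ} (E : Finset (Finset (Fin N))) (X : Finset (Fin N) → ℝ × ℝ) : ℝ :=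
  ∏ p ∈ E.sym2.filter (fun p => ¬ p.IsDiag), pairSign X p

/-- `b_H`: the expectation of `B_H(X)` over i.i.d. chords with law `ν`. -/
def bT {N : ℕ} (E : Finset (Finset (Fin N))) : ℝ :=
  ∫ X : Finset (Fin N) → ℝ × ℝ, BE E X ∂(Measure.pi fun _ => nu)

/-- `ρ = ((q−1)! β² / 2^{q+1})^{1/(q−1)}`. -/
def rho (q : ℕ) (β : ℝ) : ℝ :=
  (((q - 1).factorial * β ^ 2 / 2 ^ (q + 1) : ℝ)) ^ ((q : ℝ) - 1)⁻¹

/-- `μ_v = (ρ^{v−1}/v!) Σ_{T ∈ 𝒯_v} b_T`. -/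
def mu (q : ℕ) (β : ℝ) (v : ℕ) : ℝ :=
  rho q β ^ (v - 1) / v.factorial * ∑ E ∈ trees q v, bT E

/-- The power series `Φ(z) = Σ_{v ≥ 1} μ_v z^v` (complex version). -/
def PhiC (q : ℕ) (β : ℝ) (z : ℂ) : ℂ :=
  ∑' v : ℕ, (mu q β (v + 1) : ℂ) * z ^ (v + 1)

/-- The power series `Φ(t) = Σ_{v ≥ 1} μ_v t^v` (real version). -/
def PhiR (q : ℕ) (β : ℝ) (t : ℝ) : ℝ :=
  ∑' v : ℕ, mu q β (v + 1) * t ^ (v + 1)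

-- ### auxiliary lemmas


instance : IsProbabilityMeasure nu := by
  constructor
  rw [nu, Measure.map_apply ((measurable_fst.min measurable_snd).prodMk
      (measurable_fst.max measurable_snd)) MeasurableSet.univ, Set.preimage_univ,
    Measure.restrict_apply_univ, Measure.volume_eq_prod, Measure.prod_prod, Real.volume_Icc]
  norm_num

lemma abs_K_le (x y : ℝ × ℝ) : |K x y| ≤ 1 := by
  unfold K; split <;> norm_num

lemma abs_pairSign_le {N : ℕ} (X : Finset (Fin N) → ℝ × ℝ) (p : Sym2 (Finset (Fin N))) :
    |pairSign X p| ≤ 1 := by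
  induction p using Sym2.ind with
  | _ e₁ e₂ =>
    show |(if Odd (e₁ ∩ e₂).card then K (X e₁) (X e₂) else 1)| ≤ 1
    split
    · exact abs_K_le _ _
    · norm_num

lemma abs_BE_le {N : ℕ} (E : Finset (Finset (Fin N))) (X : Finset (Fin N) → ℝ × ℝ) :
    |BE E X| ≤ 1 := by
  rw [BE, Finset.abs_prod]
  exact Finset.prod_le_one (fun p _ => abs_nonneg _) (fun p _ => abs_pairSign_le X p)

lemma abs_bT_le {N : ℕ} (E : Finset (Finset (Fin N))) : |bT E| ≤ 1 := by
  have h := norm_integral_le_of_norm_le_const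
    (μ := Measure.pi fun _ : Finset (Fin N) => nu) (f := BE E) (C := 1)
    (Eventually.of_forall fun X => by simpa using abs_BE_le E X)
  simpa [bT, measure_univ] using h

lemma bT_empty {N : ℕ} : bT (∅ : Finset (Finset (Fin N))) = 1 := by
  have h : ∀ X : Finset (Fin N) → ℝ × ℝ, BE (∅ : Finset (Finset (Fin N))) X = 1 := by
    intro X; rw [BE]; simp
  rw [bT]
  simp only [h]
  simp [measure_univ]

lemma trees_one (q : ℕ) (hq2 : 2 ≤ q) : trees q 1 = {∅} := by
  ext E
  simp only [trees, Finset.mem_filter, Finset.mem_univ, true_and, Finset.mem_singleton,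
    IsHypertree]
  constructor
  · rintro ⟨-, -, hcard⟩
    have h0 : E.card = 0 := by
      rcases Nat.mul_eq_zero.1 (by omega : (q - 1) * E.card = 0) with h | h
      · omega
      · exact h
    exact Finset.card_eq_zero.1 h0
  · rintro rfl
    refine ⟨fun e he => absurd he (Finset.notMem_empty e), fun a b => ?_, by simp⟩
    have : a = b := Subsingleton.elim a b
    exact this ▸ Relation.ReflTransGen.refl

lemma mu_one (q : ℕ) (β : ℝ) (hq2 : 2 ≤ q) : mu q β 1 = 1 := by
  rw [mu, trees_one q hq2]
  simp [bT_empty]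

lemma trees_card_le (q v : ℕ) (hq2 : 2 ≤ q) :
    (trees q v).card ≤ (Nat.choose v q).choose ((v - 1) / (q - 1)) := by
  classical
  have hsub : trees q v ⊆
      Finset.powersetCard ((v - 1) / (q - 1)) (Finset.powersetCard q Finset.univ) := by
    intro E hE
    simp only [trees, Finset.mem_filter, IsHypertree] at hE
    obtain ⟨-, huni, -, hcard⟩ := hE
    rw [Finset.mem_powersetCard]
    constructor
    · intro e he
      rw [Finset.mem_powersetCard_univ]
      exact huni e he
    · rw [← hcard, Nat.mul_div_cancel_left]
      omega
  calc (trees q v).card ≤ _ := Finset.card_le_card hsub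
    _ = (Nat.choose v q).choose ((v - 1) / (q - 1)) := by
        rw [Finset.card_powersetCard, Finset.card_powersetCard, Finset.card_univ,
          Fintype.card_fin]

lemma rho_nonneg (q : ℕ) (β : ℝ) : 0 ≤ rho q β :=
  Real.rpow_nonneg (by positivity) _

lemma abs_mu_le (q : ℕ) (β : ℝ) (v : ℕ) (hq2 : 2 ≤ q) (hv : 1 ≤ v) :
    |mu q β v| ≤ rho q β ^ (v - 1) * Real.exp (2 * v) := by
  have hρ0 : 0 ≤ rho q β := rho_nonneg q β
  by_cases hne : trees q v = ∅
  · rw [mu, hne]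
    simp only [Finset.sum_empty, mul_zero, abs_zero]
    positivity
  obtain ⟨E₀, hE₀⟩ := Finset.nonempty_iff_ne_empty.2 hne
  have hE₀' : (q - 1) * E₀.card = v - 1 := by
    simp only [trees, Finset.mem_filter, IsHypertree] at hE₀
    exact hE₀.2.2.2
  set m := (v - 1) / (q - 1) with hm
  have hmE : E₀.card = m := by
    rw [hm, ← hE₀', Nat.mul_div_cancel_left]
    omega
  have hqm : q * m = (v - 1) + m := by
    have h1 : q * m = (q - 1) * m + m := by
      have hk : q - 1 + 1 = q := by omega
      calc q * m = (q - 1 + 1) * m := by rw [hk]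
        _ = (q - 1) * m + m := by ring
    rw [h1, ← hmE, hE₀']
  have hsum : |∑ E ∈ trees q v, bT E| ≤ ((trees q v).card : ℝ) := by
    calc |∑ E ∈ trees q v, bT E| ≤ ∑ E ∈ trees q v, |bT E| := Finset.abs_sum_le_sum_abs _ _
      _ ≤ ∑ _E ∈ trees q v, (1 : ℝ) := Finset.sum_le_sum (fun E _ => abs_bT_le E)
      _ = ((trees q v).card : ℝ) := by simp
  have hcard : ((trees q v).card : ℝ) ≤ ((v : ℝ) ^ ((v - 1) + m)) / m.factorial := by
    calc ((trees q v).card : ℝ) ≤ ((Nat.choose v q).choose m : ℝ) := by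
          exact_mod_cast trees_card_le q v hq2
      _ ≤ ((Nat.choose v q : ℝ)) ^ m / m.factorial := Nat.choose_le_pow_div m _
      _ ≤ ((v : ℝ) ^ q) ^ m / m.factorial := by
          gcongr
          exact_mod_cast Nat.choose_le_pow v q
      _ = (v : ℝ) ^ ((v - 1) + m) / m.factorial := by rw [← pow_mul, hqm]
  rw [mu, abs_mul, abs_of_nonneg (by positivity : (0:ℝ) ≤ rho q β ^ (v - 1) / v.factorial)]
  have hfac : ((v - 1).factorial : ℝ) ≤ (v.factorial : ℝ) := by
    exact_mod_cast Nat.factorial_le (by omega : v - 1 ≤ v)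
  have hexp1 : (v : ℝ) ^ (v - 1) / v.factorial ≤ Real.exp v := by
    refine le_trans ?_ (Real.pow_div_factorial_le_exp (x := (v : ℝ)) (Nat.cast_nonneg v) (v - 1))
    apply div_le_div_of_nonneg_left (by positivity)
    · exact_mod_cast Nat.factorial_pos _
    · exact_mod_cast Nat.factorial_le (by omega : v - 1 ≤ v)
  have hexp2 : (v : ℝ) ^ m / m.factorial ≤ Real.exp v :=
    Real.pow_div_factorial_le_exp (x := (v : ℝ)) (Nat.cast_nonneg v) m
  calc rho q β ^ (v - 1) / v.factorial * |∑ E ∈ trees q v, bT E|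
      ≤ rho q β ^ (v - 1) / v.factorial * ((v : ℝ) ^ ((v - 1) + m) / m.factorial) := by
        have := hsum.trans hcard
        gcongr
    _ = rho q β ^ (v - 1) * (((v : ℝ) ^ (v - 1) / v.factorial) * ((v : ℝ) ^ m / m.factorial)) := by
        rw [pow_add]; ring
    _ ≤ rho q β ^ (v - 1) * (Real.exp v * Real.exp v) := by
        have h1 : (0:ℝ) ≤ (v : ℝ) ^ m / m.factorial := by positivity
        gcongr
    _ = rho q β ^ (v - 1) * Real.exp (2 * v) := by
        rw [← Real.exp_add, two_mul]

lemma rho_le (q : ℕ) (hq2 : 2 ≤ q) {ε : ℝ} (hε : 0 < ε) {β : ℝ}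
    (hβ : |β| ≤ Real.sqrt (2 ^ (q + 1) * ε ^ (q - 1) / (q - 1).factorial)) :
    rho q β ≤ ε := by
  have hq1 : (1 : ℝ) ≤ (q : ℝ) - 1 := by
    have : (2 : ℝ) ≤ (q : ℝ) := by exact_mod_cast hq2
    linarith
  have h1 : β ^ 2 ≤ 2 ^ (q + 1) * ε ^ (q - 1) / (q - 1).factorial := by
    calc β ^ 2 = |β| ^ 2 := (sq_abs β).symm
      _ ≤ (Real.sqrt (2 ^ (q + 1) * ε ^ (q - 1) / (q - 1).factorial)) ^ 2 := by
          exact pow_le_pow_left₀ (abs_nonneg β) hβ 2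
      _ = _ := Real.sq_sqrt (by positivity)
  have hfac : (0:ℝ) < (q - 1).factorial := by exact_mod_cast Nat.factorial_pos _
  have hbase : ((q - 1).factorial : ℝ) * β ^ 2 / 2 ^ (q + 1) ≤ ε ^ (q - 1) := by
    rw [div_le_iff₀ (by positivity : (0:ℝ) < 2 ^ (q + 1))]
    calc ((q - 1).factorial : ℝ) * β ^ 2
        ≤ ((q - 1).factorial : ℝ) * (2 ^ (q + 1) * ε ^ (q - 1) / (q - 1).factorial) := by
          gcongr
      _ = ε ^ (q - 1) * 2 ^ (q + 1) := by field_simp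
  calc rho q β ≤ ((ε ^ (q - 1) : ℝ)) ^ ((q : ℝ) - 1)⁻¹ := by
        rw [rho]
        exact Real.rpow_le_rpow (by positivity) hbase (by positivity)
    _ = ε := by
        rw [← Real.rpow_natCast ε (q - 1), ← Real.rpow_mul hε.le]
        rw [show ((q - 1 : ℕ) : ℝ) = (q : ℝ) - 1 by
          push_cast [Nat.cast_sub (by omega : 1 ≤ q)]; ring]
        rw [mul_inv_cancel₀ (by linarith : (q : ℝ) - 1 ≠ 0), Real.rpow_one]



/-- For every `c > 0` there is `β* > 0` such that for `|β| ≤ β*` the power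
series `Φ` converges absolutely on `{|z| ≤ 2}` and
`sup_{|z|≤2} |Φ(z) − z| ≤ c`, `sup_{|z|≤2} |Φ'(z) − 1| ≤ c`, `sup_{|z|≤2} |z|²|Φ''(z)| ≤ c`. -/
theorem Phi_bounds (q : ℕ) (hq : Even q) (hq2 : 2 ≤ q) :
    ∀ c : ℝ, 0 < c → ∃ βs : ℝ, 0 < βs ∧ ∀ β : ℝ, |β| ≤ βs →
      (∀ z : ℂ, ‖z‖ ≤ 2 → Summable (fun v : ℕ => ‖(mu q β (v + 1) : ℂ) * z ^ (v + 1)‖)) ∧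
      (∀ z : ℂ, ‖z‖ ≤ 2 →
        ‖PhiC q β z - z‖ ≤ c ∧
        ‖deriv (PhiC q β) z - 1‖ ≤ c ∧
        ‖z‖ ^ 2 * ‖deriv (deriv (PhiC q β)) z‖ ≤ c) := by
  intro c hc
  set δ : ℝ := min (1 / 10) (c / (200 * Real.exp 2)) with hδdef
  have hδ0 : 0 < δ := lt_min (by norm_num) (by positivity)
  have hδ10 : δ ≤ 1 / 10 := min_le_left _ _
  have hδc : 200 * Real.exp 2 * δ ≤ c := by
    have h := min_le_right (1 / 10) (c / (200 * Real.exp 2))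
    calc 200 * Real.exp 2 * δ ≤ 200 * Real.exp 2 * (c / (200 * Real.exp 2)) := by gcongr
      _ = c := by field_simp
  set ε : ℝ := δ / Real.exp 2 with hεdef
  have hε0 : 0 < ε := by positivity
  have hεδ : ε * Real.exp 2 = δ := by rw [hεdef]; field_simp
  refine ⟨Real.sqrt (2 ^ (q + 1) * ε ^ (q - 1) / (q - 1).factorial),
    Real.sqrt_pos.2 (by positivity), ?_⟩
  intro β hβ
  have hρ : rho q β ≤ ε := rho_le q hq2 hε0 hβ
  have hρ0 : 0 ≤ rho q β := rho_nonneg q β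
  have hμ1 : mu q β 1 = 1 := mu_one q β hq2
  set c' : ℕ → ℂ := fun n => if n = 0 then 0 else (mu q β n : ℂ) with hc'def
  have hcn : ∀ n : ℕ, ‖c' n‖ ≤ Real.exp 2 * δ ^ (n - 1) := by
    intro n
    match n with
    | 0 =>
      have h0 : ‖c' 0‖ = 0 := by simp [hc'def]
      rw [h0]; positivity
    | 1 =>
      simp only [hc'def]
      norm_num [hμ1]
    | (n + 2) =>
      have h := abs_mu_le q β (n + 2) hq2 (by omega)
      have e1 : Real.exp (2 * ((n : ℝ) + 2)) = Real.exp 2 * Real.exp 2 ^ (n + 1) := by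
        rw [← Real.exp_nat_mul, ← Real.exp_add]
        congr 1
        push_cast; ring
      have heq : rho q β ^ (n + 2 - 1) * Real.exp (2 * ((n : ℝ) + 2)) =
          Real.exp 2 * (rho q β * Real.exp 2) ^ (n + 1) := by
        rw [show (n + 2 - 1 : ℕ) = n + 1 by omega, e1, mul_pow]
        ring
      have h2 : (rho q β * Real.exp 2) ^ (n + 1) ≤ δ ^ (n + 1) := by
        apply pow_le_pow_left₀ (by positivity)
        calc rho q β * Real.exp 2 ≤ ε * Real.exp 2 := by gcongr
          _ = δ := hεδ
      have hnorm : ‖c' (n + 2)‖ = |mu q β (n + 2)| := by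
        simp [hc'def, Complex.norm_real]
      rw [hnorm, show (n + 2 - 1 : ℕ) = n + 1 by omega]
      calc |mu q β (n + 2)| ≤ rho q β ^ (n + 2 - 1) * Real.exp (2 * ((n : ℕ) + 2 : ℕ)) := h
        _ = Real.exp 2 * (rho q β * Real.exp 2) ^ (n + 1) := by
            rw [← heq]; congr 2; push_cast; ring
        _ ≤ Real.exp 2 * δ ^ (n + 1) :=
            mul_le_mul_of_nonneg_left h2 (Real.exp_pos 2).le
  set M : ℝ := 50 * Real.exp 2 * δ with hMdef
  have hM0 : 0 ≤ M := by positivity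
  have h4M : 4 * M ≤ c := by
    calc 4 * M = 200 * Real.exp 2 * δ := by rw [hMdef]; ring
      _ ≤ c := hδc
  have hMc : M ≤ c := by linarith
  have h5δ : 5 * δ ≤ 1 / 2 := by linarith
  have hub : ∀ z : ℂ, ‖z‖ ≤ 5 → ∀ n : ℕ, ‖c' n * z ^ n‖ ≤ 10 * Real.exp 2 * (1 / 2) ^ n := by
    intro z hz n
    match n with
    | 0 => simp only [hc'def]; simp; positivity
    | (k + 1) =>
      rw [norm_mul, norm_pow]
      have h1 := hcn (k + 1)
      rw [show (k + 1 - 1 : ℕ) = k by omega] at h1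
      calc ‖c' (k + 1)‖ * ‖z‖ ^ (k + 1)
          ≤ (Real.exp 2 * δ ^ k) * 5 ^ (k + 1) := by gcongr
        _ = 5 * Real.exp 2 * (5 * δ) ^ k := by ring
        _ ≤ 5 * Real.exp 2 * (1 / 2) ^ k := by gcongr
        _ = 10 * Real.exp 2 * (1 / 2) ^ (k + 1) := by ring
  have hgeo : Summable (fun n : ℕ => 10 * Real.exp 2 * (1 / 2 : ℝ) ^ n) :=
    summable_geometric_two.mul_left _
  have hsummable : ∀ z : ℂ, ‖z‖ ≤ 5 → Summable (fun n => ‖c' n * z ^ n‖) := by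
    intro z hz
    exact Summable.of_nonneg_of_le (fun n => norm_nonneg _) (hub z hz) hgeo
  set p : FormalMultilinearSeries ℂ ℂ ℂ := FormalMultilinearSeries.ofScalars ℂ c' with hpdef
  have hpsum : ∀ z : ℂ, p.sum z = ∑' n, c' n * z ^ n := by
    intro z
    refine tsum_congr fun n => ?_
    rw [hpdef, FormalMultilinearSeries.ofScalars_apply_eq, smul_eq_mul]
  have hcoefb : ∀ n : ℕ, ‖c' n‖ * (5 : ℝ) ^ n ≤ 10 * Real.exp 2 * (1 / 2) ^ n := by
    intro n
    have h5 : ‖(5 : ℂ)‖ = 5 := by norm_num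
    have h := hub 5 (le_of_eq h5) n
    rwa [norm_mul, norm_pow, h5] at h
  have hrad : ((5 : NNReal) : ENNReal) ≤ p.radius := by
    apply FormalMultilinearSeries.le_radius_of_summable
    apply Summable.of_nonneg_of_le (fun n => by positivity) _ hgeo
    intro n
    calc ‖p n‖ * ((5 : NNReal) : ℝ) ^ n = ‖c' n‖ * (5 : ℝ) ^ n := by
          rw [hpdef, FormalMultilinearSeries.ofScalars_norm]; norm_num
      _ ≤ _ := hcoefb n
  have hball5 : HasFPowerSeriesOnBall p.sum p 0 ((5 : NNReal) : ENNReal) :=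
    (p.hasFPowerSeriesOnBall (lt_of_lt_of_le (ENNReal.coe_pos.mpr (by norm_num)) hrad)).mono
      (ENNReal.coe_pos.mpr (by norm_num)) hrad
  have hEball : Metric.eball (0 : ℂ) ((5 : NNReal) : ENNReal) = Metric.ball (0 : ℂ) 5 := by
    rw [Metric.emetric_ball_nnreal]
    norm_num
  have hdiff : DifferentiableOn ℂ p.sum (Metric.ball (0 : ℂ) 5) := by
    rw [← hEball]
    exact hball5.differentiableOn
  set g : ℂ → ℂ := fun w => p.sum w - w with hgdef
  have hgd : DifferentiableOn ℂ g (Metric.ball (0 : ℂ) 5) := hdiff.sub differentiableOn_id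
  have hsplit : ∀ w : ℂ, ‖w‖ ≤ 5 → p.sum w = w + ∑' k, c' (k + 2) * w ^ (k + 2) := by
    intro w hw
    have hs : Summable (fun n => c' n * w ^ n) := (hsummable w hw).of_norm
    have hs1 : Summable (fun n => c' (n + 1) * w ^ (n + 1)) :=
      (summable_nat_add_iff (f := fun n => c' n * w ^ n) 1).mpr hs
    have htail : ∑' (n : ℕ), c' (n + 1 + 1) * w ^ (n + 1 + 1) = ∑' k, c' (k + 2) * w ^ (k + 2) :=
      tsum_congr fun k => by norm_num
    rw [hpsum w, hs.tsum_eq_zero_add, hs1.tsum_eq_zero_add, htail]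
    simp [hc'def, hμ1]
  have hterm : ∀ w : ℂ, ‖w‖ ≤ 5 → ∀ k : ℕ,
      ‖c' (k + 2) * w ^ (k + 2)‖ ≤ 25 * Real.exp 2 * δ * (1 / 2) ^ k := by
    intro w hw k
    rw [norm_mul, norm_pow]
    have h1 := hcn (k + 2)
    rw [show (k + 2 - 1 : ℕ) = k + 1 by omega] at h1
    calc ‖c' (k + 2)‖ * ‖w‖ ^ (k + 2) ≤ (Real.exp 2 * δ ^ (k + 1)) * 5 ^ (k + 2) := by
          gcongr
      _ = 25 * Real.exp 2 * δ * (5 * δ) ^ k := by ring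
      _ ≤ 25 * Real.exp 2 * δ * (1 / 2) ^ k := by gcongr
  have hgeo2 : Summable (fun k : ℕ => 25 * Real.exp 2 * δ * (1 / 2 : ℝ) ^ k) :=
    summable_geometric_two.mul_left _
  have hT : ∀ w : ℂ, ‖w‖ ≤ 5 → ‖∑' k, c' (k + 2) * w ^ (k + 2)‖ ≤ M := by
    intro w hw
    have hsn : Summable (fun k => ‖c' (k + 2) * w ^ (k + 2)‖) :=
      (summable_nat_add_iff (f := fun n => ‖c' n * w ^ n‖) 2).mpr (hsummable w hw)
    calc ‖∑' k, c' (k + 2) * w ^ (k + 2)‖ ≤ ∑' k, ‖c' (k + 2) * w ^ (k + 2)‖ :=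
          norm_tsum_le_tsum_norm hsn
      _ ≤ ∑' k, 25 * Real.exp 2 * δ * (1 / 2 : ℝ) ^ k := Summable.tsum_le_tsum (hterm w hw) hsn hgeo2
      _ = 25 * Real.exp 2 * δ * 2 := by rw [tsum_mul_left, tsum_geometric_two]
      _ = M := by rw [hMdef]; ring
  have hgM : ∀ w ∈ Metric.ball (0 : ℂ) 5, ‖g w‖ ≤ M := by
    intro w hw
    rw [Metric.mem_ball, dist_zero_right] at hw
    have hw5 : ‖w‖ ≤ 5 := hw.le
    have hgw : g w = ∑' k, c' (k + 2) * w ^ (k + 2) := by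
      show p.sum w - w = _
      rw [hsplit w hw5]; ring
    rw [hgw]
    exact hT w hw5
  have cauchy : ∀ (f : ℂ → ℂ) (R : ℝ), DifferentiableOn ℂ f (Metric.ball 0 R) →
      (∀ w ∈ Metric.ball (0 : ℂ) R, ‖f w‖ ≤ M) →
      ∀ w : ℂ, ‖w‖ + 1 < R → ‖deriv f w‖ ≤ M := by
    intro f R hf hbound w hw
    have hsub : Metric.closedBall w 1 ⊆ Metric.ball (0 : ℂ) R := by
      intro x hx
      rw [Metric.mem_closedBall, dist_eq_norm] at hx
      rw [Metric.mem_ball, dist_zero_right]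
      calc ‖x‖ = ‖x - w + w‖ := by rw [sub_add_cancel]
        _ ≤ ‖x - w‖ + ‖w‖ := norm_add_le _ _
        _ < R := by linarith
    have hd : DiffContOnCl ℂ f (Metric.ball w 1) := by
      apply DifferentiableOn.diffContOnCl
      rw [closure_ball w one_ne_zero]
      exact hf.mono hsub
    have h := Complex.norm_deriv_le_of_forall_mem_sphere_norm_le one_pos hd
      (fun x hx => hbound x (hsub (Metric.sphere_subset_closedBall hx)))
    simpa using h
  have hg1 : ∀ w : ℂ, ‖w‖ < 7 / 2 → ‖deriv g w‖ ≤ M := by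
    intro w hw
    exact cauchy g 5 hgd hgM w (by linarith)
  have hganal : AnalyticOnNhd ℂ g (Metric.ball (0 : ℂ) 5) :=
    hgd.analyticOnNhd Metric.isOpen_ball
  have hdg : DifferentiableOn ℂ (deriv g) (Metric.ball (0 : ℂ) (7 / 2)) :=
    (hganal.deriv.differentiableOn).mono (Metric.ball_subset_ball (by norm_num))
  have hg2 : ∀ w : ℂ, ‖w‖ ≤ 2 → ‖deriv (deriv g) w‖ ≤ M := by
    intro w hw
    apply cauchy (deriv g) (7 / 2) hdg _ w (by linarith)
    intro x hx
    rw [Metric.mem_ball, dist_zero_right] at hx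
    exact hg1 x hx
  have hPhi : PhiC q β = p.sum := by
    funext w
    rw [PhiC, hpsum w]
    have hcongr : ∀ v : ℕ, (mu q β (v + 1) : ℂ) * w ^ (v + 1) = c' (v + 1) * w ^ (v + 1) := by
      intro v; simp [hc'def]
    rw [tsum_congr hcongr]
    by_cases hs : Summable (fun n : ℕ => c' n * w ^ n)
    · rw [hs.tsum_eq_zero_add]
      simp [hc'def]
    · rw [tsum_eq_zero_of_not_summable hs,
        tsum_eq_zero_of_not_summable
          (fun h => hs ((summable_nat_add_iff (f := fun n => c' n * w ^ n) 1).mp h))]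
  have hpg : p.sum = fun u => g u + u := by
    funext u
    show p.sum u = (p.sum u - u) + u
    ring
  have hder : ∀ w ∈ Metric.ball (0 : ℂ) 5, deriv (PhiC q β) w = deriv g w + 1 := by
    intro w hw
    have hga : DifferentiableAt ℂ g w := hgd.differentiableAt (Metric.isOpen_ball.mem_nhds hw)
    rw [hPhi, hpg, deriv_fun_add hga differentiableAt_fun_id, deriv_id'']
  have h2ball : ∀ z : ℂ, ‖z‖ ≤ 2 → z ∈ Metric.ball (0 : ℂ) 5 := by
    intro z hz
    rw [Metric.mem_ball, dist_zero_right]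
    linarith
  constructor
  · intro z hz
    have hz5 : ‖z‖ ≤ 5 := by linarith
    have hsh : Summable (fun v : ℕ => ‖c' (v + 1) * z ^ (v + 1)‖) :=
      (summable_nat_add_iff (f := fun n => ‖c' n * z ^ n‖) 1).mpr (hsummable z hz5)
    exact hsh.congr fun v => by simp [hc'def]
  · intro z hz
    have hz5 : ‖z‖ ≤ 5 := by linarith
    have hzb := h2ball z hz
    refine ⟨?_, ?_, ?_⟩
    · have hPz : PhiC q β z - z = g z := by rw [hPhi]
      rw [hPz]
      exact (hgM z hzb).trans hMc
    · rw [hder z hzb, add_sub_cancel_right]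
      exact (hg1 z (by linarith)).trans hMc
    · have hev : deriv (PhiC q β) =ᶠ[nhds z] fun w => deriv g w + 1 :=
        Filter.eventuallyEq_of_mem (Metric.isOpen_ball.mem_nhds hzb) hder
      have hd2 : deriv (deriv (PhiC q β)) z = deriv (deriv g) z := by
        rw [hev.deriv_eq, deriv_add_const]
      rw [hd2]
      calc ‖z‖ ^ 2 * ‖deriv (deriv g) z‖ ≤ 2 ^ 2 * M :=
            mul_le_mul (pow_le_pow_left₀ (norm_nonneg z) hz 2) (hg2 z hz) (norm_nonneg _)
              (by positivity)
        _ = 4 * M := by ring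
        _ ≤ c := h4M
end SYK
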